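/- Let 𝓛 assign to each finite alphabet A a collection 𝓛(A) of languages over A such that: (a) each 𝓛(A) is closed under binary union, and (b) for every length-preserving morphism φ : A* → B* (the monoid homomorphism induced by a map of letters A → B) and every L ∈ 𝓛(B), the inverse image φ⁻¹(L) lies in 𝓛(A). Suppose G and H are groups with finite symmetric generating sets X and Y respectively, each containing the identity element of its group, with Geo(G,X) ∈ 𝓛(X) and Geo(H,Y) ∈ 𝓛(Y). Then Z = {(x,y) : x ∈ X, y ∈ Y} is a finite symmetric generating set of G × H and Geo(G × H, Z) ∈ 𝓛(Z). -/

import Mathlib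

/-- `pre_{k-1}`, `suf_{k-1}` and `sub_k` agree: the equivalence `∼_k` on words. -/
def SimK {A : Type*} (k : ℕ) (u v : List A) : Prop :=
  u.take (k - 1) = v.take (k - 1) ∧
  u.drop (u.length - (k - 1)) = v.drop (v.length - (k - 1)) ∧
  ∀ s : List A, s.length = k → (s <:+: u ↔ s <:+: v)

/-- A language `L` is `k`-locally testable if membership is invariant under `∼_k`. -/
def LocallyTestable {A : Type*} (k : ℕ) (L : Set (List A)) : Prop :=
  ∀ u v : List A, SimK k u v → (u ∈ L ↔ v ∈ L)

/-- The syntactic congruence of a language: `u ∼_L v` iff `sut ∈ L ↔ svt ∈ L` for all `s, t`. -/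
def SynCong {A : Type*} (L : Set (List A)) (u v : List A) : Prop :=
  ∀ s t : List A, s ++ u ++ t ∈ L ↔ s ++ v ++ t ∈ L

/-- The element of `G` represented by a word over the generating set `X`. -/
def wordProd {G : Type*} [Group G] {X : Set G} (w : List X) : G :=
  (w.map Subtype.val).prod

/-- A word over `X` is geodesic if no word representing the same element is shorter. -/
def IsGeodesic {G : Type*} [Group G] (X : Set G) (w : List X) : Prop :=
  ∀ v : List X, wordProd v = wordProd w → w.length ≤ v.length

/-- The language of all geodesic words over `X`. -/
def Geo {G : Type*} [Group G] (X : Set G) : Set (List X) :=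
  {w | IsGeodesic X w}

/-- The `j`-th power of a word in the free monoid (concatenation of `j` copies). -/
def listPow {A : Type*} (w : List A) : ℕ → List A
  | 0 => []
  | n + 1 => w ++ listPow w n

/-! The word metric of `G × H` with respect to `X ×ˢ Y` is the maximum of the word metrics of
the factors: since `1 ∈ X` and `1 ∈ Y`, the shorter of two words in the factors can be padded
with the identity letter and the two zipped. Hence a word over `X ×ˢ Y` is geodesic exactly when
one of its two letterwise projections is, so `Geo (X ×ˢ Y)` is the union of the inverse images
of `Geo X` and `Geo Y` under the length-preserving projections. -/

section Words

variable {G : Type*} [Group G] {X : Set G}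

theorem wordProd_append (u v : List X) : wordProd (u ++ v) = wordProd u * wordProd v := by
  simp [wordProd]

theorem wordProd_replicate_one (h1 : (1 : G) ∈ X) (n : ℕ) :
    wordProd (List.replicate n (⟨1, h1⟩ : X)) = 1 := by
  simp [wordProd]

theorem wordProd_map {G' : Type*} [Group G'] {X' : Set G'} (φ : G →* G') {f : X → X'}
    (hf : ∀ a, (f a : G') = φ a) (w : List X) : wordProd (w.map f) = φ (wordProd w) := by
  simp only [wordProd, List.map_map, map_list_prod]
  exact congrArg List.prod (List.map_congr_left fun a _ => hf a)

theorem IsGeodesic.of_map {G' : Type*} [Group G'] {X' : Set G'} (φ : G →* G') {f : X → X'}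
    (hf : ∀ a, (f a : G') = φ a) {w : List X} (hw : IsGeodesic X' (w.map f)) :
    IsGeodesic X w := fun v hv => by
  simpa using hw (v.map f) (by rw [wordProd_map φ hf, wordProd_map φ hf, hv])

theorem exists_wordProd_eq_of_not_isGeodesic (h1 : (1 : G) ∈ X) {w : List X}
    (hw : ¬IsGeodesic X w) : ∃ v : List X, wordProd v = wordProd w ∧ v.length + 1 = w.length := by
  obtain ⟨v, hv, hvw⟩ : ∃ v : List X, wordProd v = wordProd w ∧ v.length < w.length := by
    simpa [IsGeodesic] using hw
  refine ⟨v ++ List.replicate (w.length - 1 - v.length) ⟨1, h1⟩, ?_, ?_⟩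
  · rw [wordProd_append, wordProd_replicate_one, mul_one, hv]
  · simp only [List.length_append, List.length_replicate]
    omega

end Words

section Product

variable {G H : Type*} [Group G] [Group H] {X : Set G} {Y : Set H}

theorem wordProd_eq_wordProd_map_fst_wordProd_map_snd (w : List ↥(X ×ˢ Y)) :
    wordProd w = (wordProd (w.map (Prod.fst ∘ Equiv.Set.prod X Y)),
      wordProd (w.map (Prod.snd ∘ Equiv.Set.prod X Y))) := by
  rw [wordProd_map (MonoidHom.fst G H) fun _ => rfl, wordProd_map (MonoidHom.snd G H) fun _ => rfl]
  rfl

theorem isGeodesic_prod_iff (hX1 : (1 : G) ∈ X) (hY1 : (1 : H) ∈ Y) (w : List ↥(X ×ˢ Y)) :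
    IsGeodesic (X ×ˢ Y) w ↔ IsGeodesic X (w.map (Prod.fst ∘ Equiv.Set.prod X Y)) ∨
      IsGeodesic Y (w.map (Prod.snd ∘ Equiv.Set.prod X Y)) := by
  refine ⟨fun hw => ?_, ?_⟩
  · by_contra! ⟨hfst, hsnd⟩
    obtain ⟨u, hu, hul⟩ := exists_wordProd_eq_of_not_isGeodesic hX1 hfst
    obtain ⟨v, hv, hvl⟩ := exists_wordProd_eq_of_not_isGeodesic hY1 hsnd
    simp only [List.length_map] at hul hvl
    have hlen : u.length = v.length := by omega
    let z := (u.zip v).map (Equiv.Set.prod X Y).symm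
    have hzfst : z.map (Prod.fst ∘ Equiv.Set.prod X Y) = u := by
      simp only [z, List.map_map, Function.comp_assoc, Equiv.self_comp_symm, Function.comp_id]
      exact List.map_fst_zip hlen.le
    have hzsnd : z.map (Prod.snd ∘ Equiv.Set.prod X Y) = v := by
      simp only [z, List.map_map, Function.comp_assoc, Equiv.self_comp_symm, Function.comp_id]
      exact List.map_snd_zip hlen.ge
    have hz : wordProd z = wordProd w := by
      rw [wordProd_eq_wordProd_map_fst_wordProd_map_snd z, hzfst, hzsnd, hu, hv,
        ← wordProd_eq_wordProd_map_fst_wordProd_map_snd]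
    have hwz := hw z hz
    simp only [z, List.length_map, List.length_zip] at hwz
    omega
  · rintro (hw | hw)
    · exact hw.of_map (MonoidHom.fst G H) fun _ => rfl
    · exact hw.of_map (MonoidHom.snd G H) fun _ => rfl

end Product

/-- If a class of languages `𝓛` is closed under binary union and under inverse images of
length-preserving morphisms (induced by maps of letters), and `G`, `H` have finite
symmetric generating sets `X ∋ 1`, `Y ∋ 1` with `Geo(G,X) ∈ 𝓛(X)` and `Geo(H,Y) ∈ 𝓛(Y)`,
then `Z = X × Y` is a finite symmetric generating set of `G × H` with
`Geo(G×H,Z) ∈ 𝓛(Z)`. -/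
theorem stmt5 (𝓛 : (A : Type u) → Set (Set (List A)))
    (hunion : ∀ (A : Type u), Finite A → ∀ L₁ L₂ : Set (List A),
      L₁ ∈ 𝓛 A → L₂ ∈ 𝓛 A → L₁ ∪ L₂ ∈ 𝓛 A)
    (hinv : ∀ (A B : Type u), Finite A → Finite B → ∀ (f : A → B) (L : Set (List B)),
      L ∈ 𝓛 B → {w : List A | w.map f ∈ L} ∈ 𝓛 A)
    {G H : Type u} [Group G] [Group H] (X : Set G) (Y : Set H)
    (hXfin : X.Finite) (hXsym : ∀ x ∈ X, x⁻¹ ∈ X) (hXgen : Subgroup.closure X = ⊤)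
    (hX1 : (1 : G) ∈ X)
    (hYfin : Y.Finite) (hYsym : ∀ y ∈ Y, y⁻¹ ∈ Y) (hYgen : Subgroup.closure Y = ⊤)
    (hY1 : (1 : H) ∈ Y)
    (hGL : Geo X ∈ 𝓛 X) (hHL : Geo Y ∈ 𝓛 Y) :
    (X ×ˢ Y).Finite ∧ (∀ z ∈ X ×ˢ Y, z⁻¹ ∈ X ×ˢ Y) ∧
      Subgroup.closure (X ×ˢ Y) = ⊤ ∧ Geo (X ×ˢ Y) ∈ 𝓛 (X ×ˢ Y) := by
  have hZfin : (X ×ˢ Y).Finite := hXfin.prod hYfin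
  have hGeo : Geo (X ×ˢ Y) = {w | w.map (Prod.fst ∘ Equiv.Set.prod X Y) ∈ Geo X} ∪
      {w | w.map (Prod.snd ∘ Equiv.Set.prod X Y) ∈ Geo Y} :=
    Set.ext (isGeodesic_prod_iff hX1 hY1)
  refine ⟨hZfin, fun z hz => ⟨hXsym _ hz.1, hYsym _ hz.2⟩, ?_, ?_⟩
  · rw [Subgroup.closure_prod hX1 hY1, hXgen, hYgen, Subgroup.top_prod_top]
  · have := hXfin.to_subtype
    have := hYfin.to_subtype
    have := hZfin.to_subtype
    rw [hGeo]
    exact hunion _ inferInstance _ _ (hinv _ _ inferInstance inferInstance _ _ hGL)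
      (hinv _ _ inferInstance inferInstance _ _ hHL)
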